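/- There exists a constant C > 0 such that for all r > 0, α₁ ∈ (0,1), all z = (x,y,t) with ‖z‖ ≤ θr, t ≤ 0, and all ζ = (ξ,η,τ) with |ξ| ≤ r, |η| ≤ 8r³ and τ ≤ −(α₁/2)r², one has Γ(z,ζ) ≥ C(α₁,θ) r⁻⁴, where Γ is the Kolmogorov fundamental solution. -/

import Mathlib

/-!
With `s = t − τ`, the hypotheses squeeze `s` between `c r²` and `r²`, where `c = α₁/2 − θ² > 0`,
while `|x|, |ξ| ≤ r` and `|y − η| ≤ 9 r³`. Every term of the exponent of `Γ` is then bounded by a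
power of `1/c`, since numerator and denominator have the same homogeneity in `r`; and the
prefactor `√3 / (2π s²)` is at least `√3 / (2π r⁴)`.
-/

open Real

/-- Fundamental solution with pole at ζ = (ξ,η,τ). -/
noncomputable def kolGammaP (z ζ : ℝ × ℝ × ℝ) : ℝ :=
  if ζ.2.2 < z.2.2 then
    (Real.sqrt 3 / (2 * π * (z.2.2 - ζ.2.2) ^ 2)) *
      Real.exp (-(z.1 ^ 2 + z.1 * ζ.1 + ζ.1 ^ 2) / (z.2.2 - ζ.2.2)
        - 3 * (z.1 + ζ.1) * (z.2.1 - ζ.2.1) / (z.2.2 - ζ.2.2) ^ 2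
        - 3 * (z.2.1 - ζ.2.1) ^ 2 / (z.2.2 - ζ.2.2) ^ 3)
  else 0

noncomputable def kolExponent (x ξ w s : ℝ) : ℝ :=
  -(x ^ 2 + x * ξ + ξ ^ 2) / s - 3 * (x + ξ) * w / s ^ 2 - 3 * w ^ 2 / s ^ 3

def intrinsicBall (ρ : ℝ) : Set (ℝ × ℝ × ℝ) :=
  {z | z.1 ^ 2 / ρ ^ 2 + z.2.1 ^ 2 / ρ ^ 6 + z.2.2 ^ 2 / ρ ^ 4 ≤ 1}

lemma abs_le_of_sq_div_le_one {a b : ℝ} (hb : 0 < b) (h : a ^ 2 / b ^ 2 ≤ 1) : |a| ≤ b :=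
  abs_le_of_sq_le_sq ((div_le_one (by positivity)).mp h) hb.le

lemma abs_le_of_mem_intrinsicBall {z : ℝ × ℝ × ℝ} {ρ : ℝ} (hρ : 0 < ρ)
    (h : z ∈ intrinsicBall ρ) : |z.1| ≤ ρ ∧ |z.2.1| ≤ ρ ^ 3 ∧ |z.2.2| ≤ ρ ^ 2 := by
  obtain ⟨x, y, t⟩ := z
  have hx : 0 ≤ x ^ 2 / ρ ^ 2 := by positivity
  have hy : 0 ≤ y ^ 2 / ρ ^ 6 := by positivity
  have ht : 0 ≤ t ^ 2 / ρ ^ 4 := by positivity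
  simp only [intrinsicBall, Set.mem_ofPred_eq] at h
  refine ⟨abs_le_of_sq_div_le_one hρ (by linarith), abs_le_of_sq_div_le_one (by positivity) ?_,
    abs_le_of_sq_div_le_one (by positivity) ?_⟩
  · rw [← pow_mul]; linarith
  · rw [← pow_mul]; linarith

lemma abs_div_le_div_of_abs_le {A N d s : ℝ} (hA : |A| ≤ N) (hd : 0 < d) (hs : d ≤ s) :
    |A / s| ≤ N / d := by
  rw [abs_div, abs_of_pos (hd.trans_le hs)]
  exact div_le_div₀ ((abs_nonneg A).trans hA) hA hd hs

lemma neg_le_kolExponent {x ξ w s a b d : ℝ} (hx : |x| ≤ a) (hξ : |ξ| ≤ a) (hw : |w| ≤ b)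
    (hd : 0 < d) (hs : d ≤ s) :
    -(3 * a ^ 2 / d + 6 * a * b / d ^ 2 + 3 * b ^ 2 / d ^ 3) ≤ kolExponent x ξ w s := by
  have ha : 0 ≤ a := (abs_nonneg x).trans hx
  have hb : 0 ≤ b := (abs_nonneg w).trans hw
  have h₁ : |x ^ 2 + x * ξ + ξ ^ 2| ≤ 3 * a ^ 2 := by
    calc |x ^ 2 + x * ξ + ξ ^ 2| ≤ |x| ^ 2 + |x| * |ξ| + |ξ| ^ 2 :=
          (abs_add_three _ _ _).trans_eq (by rw [abs_mul, abs_pow, abs_pow])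
      _ ≤ a ^ 2 + a * a + a ^ 2 := by gcongr
      _ = 3 * a ^ 2 := by ring
  have h₂ : |3 * (x + ξ) * w| ≤ 6 * a * b := by
    calc |3 * (x + ξ) * w| = 3 * |x + ξ| * |w| := by simp only [abs_mul, Nat.abs_ofNat]
      _ ≤ 3 * (|x| + |ξ|) * |w| := by gcongr; exact abs_add_le x ξ
      _ ≤ 3 * (a + a) * b := by gcongr
      _ = 6 * a * b := by ring
  have h₃ : |3 * w ^ 2| ≤ 3 * b ^ 2 := by
    rw [abs_mul, Nat.abs_ofNat, abs_pow]; gcongr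
  have e₁ := abs_le.mp (abs_div_le_div_of_abs_le h₁ hd hs)
  have e₂ := abs_le.mp (abs_div_le_div_of_abs_le h₂ (pow_pos hd 2) (pow_le_pow_left₀ hd.le hs 2))
  have e₃ := abs_le.mp (abs_div_le_div_of_abs_le h₃ (pow_pos hd 3) (pow_le_pow_left₀ hd.le hs 3))
  unfold kolExponent
  rw [neg_div]
  linarith [e₁.2, e₂.1, e₃.2]

lemma kolGammaP_eq {z ζ : ℝ × ℝ × ℝ} (h : ζ.2.2 < z.2.2) :
    kolGammaP z ζ = √3 / (2 * π * (z.2.2 - ζ.2.2) ^ 2) *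
      exp (kolExponent z.1 ζ.1 (z.2.1 - ζ.2.1) (z.2.2 - ζ.2.2)) :=
  if_pos h

lemma mul_zpow_neg_four_le_kolGammaP {z ζ : ℝ × ℝ × ℝ} {r K : ℝ}
    (hs : 0 < z.2.2 - ζ.2.2) (hsr : z.2.2 - ζ.2.2 ≤ r ^ 2)
    (hK : -K ≤ kolExponent z.1 ζ.1 (z.2.1 - ζ.2.1) (z.2.2 - ζ.2.2)) :
    √3 / (2 * π) * exp (-K) * r ^ (-4 : ℤ) ≤ kolGammaP z ζ := by
  rw [kolGammaP_eq (sub_pos.mp hs)]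
  calc √3 / (2 * π) * exp (-K) * r ^ (-4 : ℤ) = √3 / (2 * π * (r ^ 2) ^ 2) * exp (-K) := by
        rw [zpow_neg, ← pow_mul]; norm_cast; ring
    _ ≤ _ := by gcongr

/-- Lower bound for the fundamental solution: for `z` in the intrinsic ball of radius `θr`
with `t ≤ 0` and `ζ` in the cylinder `|ξ| ≤ r`, `|η| ≤ 8r³`, `−α₁r² ≤ τ ≤ −(α₁/2)r²`,
one has `Γ(z,ζ) ≥ C r⁻⁴` with `C = C(α₁, θ) > 0`. -/
theorem kolGamma_lower_bound (θ α₁ : ℝ) (hθ : θ ∈ Set.Ioo (0 : ℝ) 1)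
    (hα₁ : α₁ ∈ Set.Ioo (0 : ℝ) 1) (hθα : θ ^ 2 < α₁ / 2) :
    ∃ C : ℝ, 0 < C ∧ ∀ r : ℝ, 0 < r → ∀ z ζ : ℝ × ℝ × ℝ,
      z.1 ^ 2 / (θ * r) ^ 2 + z.2.1 ^ 2 / (θ * r) ^ 6 + z.2.2 ^ 2 / (θ * r) ^ 4 ≤ 1 →
      z.2.2 ≤ 0 →
      |ζ.1| ≤ r → |ζ.2.1| ≤ 8 * r ^ 3 →
      -α₁ * r ^ 2 ≤ ζ.2.2 → ζ.2.2 ≤ -(α₁ / 2) * r ^ 2 →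
      C * r ^ (-4 : ℤ) ≤ kolGammaP z ζ := by
  obtain ⟨hθ₀, hθ₁⟩ := hθ
  set c := α₁ / 2 - θ ^ 2 with hc_def
  have hc : 0 < c := sub_pos.mpr hθα
  refine ⟨√3 / (2 * π) * exp (-(3 / c + 54 / c ^ 2 + 243 / c ^ 3)), by positivity, ?_⟩
  rintro r hr ⟨x, y, t⟩ ⟨ξ, η, τ⟩ hball ht hξ hη hτ₁ hτ₂
  obtain ⟨hx, hy, ht'⟩ := abs_le_of_mem_intrinsicBall (mul_pos hθ₀ hr) hball
  dsimp only at hx hy ht' ht hξ hη hτ₁ hτ₂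
  have hθr : θ * r ≤ r := mul_le_of_le_one_left hr.le hθ₁.le
  have hxr : |x| ≤ r := hx.trans hθr
  have hyη : |y - η| ≤ 9 * r ^ 3 := by
    have : |y| ≤ r ^ 3 := hy.trans (by gcongr)
    linarith [abs_sub y η]
  have hs : c * r ^ 2 ≤ t - τ := by
    have : -(θ ^ 2 * r ^ 2) ≤ t := by linarith [neg_abs_le t, mul_pow θ r 2]
    rw [hc_def]; linarith
  have hsr : t - τ ≤ r ^ 2 := by
    linarith [mul_le_of_le_one_left (sq_nonneg r) hα₁.2.le]
  have hK := neg_le_kolExponent hxr hξ hyη (by positivity) hs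
  have hK_eq : 3 * r ^ 2 / (c * r ^ 2) + 6 * r * (9 * r ^ 3) / (c * r ^ 2) ^ 2
      + 3 * (9 * r ^ 3) ^ 2 / (c * r ^ 2) ^ 3 = 3 / c + 54 / c ^ 2 + 243 / c ^ 3 := by
    field_simp; ring
  rw [hK_eq] at hK
  exact mul_zpow_neg_four_le_kolGammaP (by linarith [mul_pos hc (pow_pos hr 2)]) hsr hK
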